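/- For all vectors a, b in ℝ^n and all real q ≥ 2, the inner product ⟨|b|^(q-2)·b − |a|^(q-2)·a, b − a⟩ is at least 2^(2−q)·|b − a|^q. -/

import Mathlib

/-!
Write `r = q - 2`, `u = ⟪b, b - a⟫` and `v = ⟪a, a - b⟫`, so that `u + v = ‖b - a‖²` and the inner
product on the left equals `‖b‖ʳ u + ‖a‖ʳ v`. If `v ≤ 0` then `‖a‖ ≤ ‖b‖` and `‖b - a‖ ≤ ‖b‖`, so the
left side is at least `‖b‖ʳ (u + v) ≥ ‖b - a‖ʳ⁺²`; the case `u ≤ 0` is the same with `a` and `b`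
swapped. If `u, v > 0`, Cauchy–Schwarz gives `‖b - a‖ʳ ‖b‖ʳ u ≥ uʳ⁺¹` (and likewise for `v`), and
convexity of `t ↦ tʳ⁺¹` gives `uʳ⁺¹ + vʳ⁺¹ ≥ 2⁻ʳ (u + v)ʳ⁺¹ = 2⁻ʳ ‖b - a‖²ʳ⁺²`.
-/

open RealInnerProductSpace

theorem Real.rpow_add_le_mul_rpow_add_rpow {u v p : ℝ} (hu : 0 ≤ u) (hv : 0 ≤ v) (hp : 1 ≤ p) :
    (u + v) ^ p ≤ 2 ^ (p - 1) * (u ^ p + v ^ p) := by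
  lift u to NNReal using hu
  lift v to NNReal using hv
  exact_mod_cast NNReal.rpow_add_le_mul_rpow_add_rpow u v hp

theorem Real.rpow_add_one_le_of_le_mul {u x D r : ℝ} (hu : 0 ≤ u) (hx : 0 ≤ x) (hD : 0 ≤ D)
    (hr : 0 ≤ r) (h : u ≤ x * D) : u ^ (r + 1) ≤ D ^ r * (x ^ r * u) := by
  calc u ^ (r + 1) = u ^ r * u := by rw [Real.rpow_add_one' hu (by linarith)]
    _ ≤ (x * D) ^ r * u := by gcongr
    _ = D ^ r * (x ^ r * u) := by rw [Real.mul_rpow hx hD]; ring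

section

variable {E : Type*} [NormedAddCommGroup E] [InnerProductSpace ℝ E]

theorem inner_rpow_smul_sub_rpow_smul_comm (a b : E) (r : ℝ) :
    ⟪‖a‖ ^ r • a - ‖b‖ ^ r • b, a - b⟫ = ⟪‖b‖ ^ r • b - ‖a‖ ^ r • a, b - a⟫ := by
  rw [← neg_sub b a, ← neg_sub (‖b‖ ^ r • b), inner_neg_neg]

theorem inner_rpow_smul_sub_rpow_smul_eq (a b : E) (r : ℝ) :
    ⟪‖b‖ ^ r • b - ‖a‖ ^ r • a, b - a⟫ = ‖b‖ ^ r * ⟪b, b - a⟫ + ‖a‖ ^ r * ⟪a, a - b⟫ := by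
  simp only [inner_sub_left, inner_sub_right, real_inner_smul_left]
  rw [real_inner_comm a b]
  ring

theorem inner_sub_add_inner_sub (a b : E) : ⟪b, b - a⟫ + ⟪a, a - b⟫ = ‖b - a‖ ^ 2 := by
  simp only [← real_inner_self_eq_norm_sq, inner_sub_left, inner_sub_right]
  rw [real_inner_comm a b]
  ring

theorem norm_sub_rpow_mul_sq_le_inner_of_inner_nonpos {a b : E} {r : ℝ} (hr : 0 ≤ r)
    (ha : ⟪a, a - b⟫ ≤ 0) :
    ‖b - a‖ ^ r * ‖b - a‖ ^ 2 ≤ ⟪‖b‖ ^ r • b - ‖a‖ ^ r • a, b - a⟫ := by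
  have hsum := inner_sub_add_inner_sub a b
  have hab : ‖a‖ ≤ ‖b‖ := by
    have : ‖a‖ ^ 2 ≤ ‖a‖ * ‖b‖ := by
      rw [inner_sub_right, real_inner_self_eq_norm_sq] at ha
      linarith [real_inner_le_norm a b]
    nlinarith [norm_nonneg a, norm_nonneg b]
  have hdb : ‖b - a‖ ≤ ‖b‖ := by
    nlinarith [real_inner_le_norm b (b - a), norm_nonneg (b - a), norm_nonneg b]
  rw [inner_rpow_smul_sub_rpow_smul_eq]
  calc ‖b - a‖ ^ r * ‖b - a‖ ^ 2 ≤ ‖b‖ ^ r * ‖b - a‖ ^ 2 := by gcongr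
    _ = ‖b‖ ^ r * ⟪b, b - a⟫ + ‖b‖ ^ r * ⟪a, a - b⟫ := by rw [← hsum]; ring
    _ ≤ ‖b‖ ^ r * ⟪b, b - a⟫ + ‖a‖ ^ r * ⟪a, a - b⟫ := by
      have : ‖a‖ ^ r ≤ ‖b‖ ^ r := by gcongr
      linarith [mul_le_mul_of_nonpos_right this ha]

theorem two_rpow_neg_mul_norm_sub_rpow_mul_sq_le_inner_of_pos {a b : E} {r : ℝ} (hr : 0 ≤ r)
    (hb : 0 < ⟪b, b - a⟫) (ha : 0 < ⟪a, a - b⟫) :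
    2 ^ (-r) * (‖b - a‖ ^ r * ‖b - a‖ ^ 2) ≤ ⟪‖b‖ ^ r • b - ‖a‖ ^ r • a, b - a⟫ := by
  have haD : ⟪a, a - b⟫ ≤ ‖a‖ * ‖b - a‖ := norm_sub_rev a b ▸ real_inner_le_norm _ _
  have hbD : ⟪b, b - a⟫ ≤ ‖b‖ * ‖b - a‖ := real_inner_le_norm _ _
  set D := ‖b - a‖
  have hsum : ⟪b, b - a⟫ + ⟪a, a - b⟫ = D ^ 2 := inner_sub_add_inner_sub a b
  have hD : 0 < D := by nlinarith [norm_nonneg (b - a)]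
  refine le_of_mul_le_mul_left ?_ (Real.rpow_pos_of_pos hD r)
  calc D ^ r * (2 ^ (-r) * (D ^ r * D ^ 2))
        = 2 ^ (-r) * (⟪b, b - a⟫ + ⟪a, a - b⟫) ^ (r + 1) := by
          rw [hsum, Real.rpow_add_one (by positivity), ← Real.rpow_pow_comm hD.le]
          ring
    _ ≤ 2 ^ (-r) * (2 ^ r * (⟪b, b - a⟫ ^ (r + 1) + ⟪a, a - b⟫ ^ (r + 1))) := by
          gcongr
          simpa using Real.rpow_add_le_mul_rpow_add_rpow hb.le ha.le (by linarith : 1 ≤ r + 1)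
    _ = ⟪b, b - a⟫ ^ (r + 1) + ⟪a, a - b⟫ ^ (r + 1) := by
          rw [Real.rpow_neg zero_le_two, inv_mul_cancel_left₀ (by positivity)]
    _ ≤ D ^ r * (‖b‖ ^ r * ⟪b, b - a⟫) + D ^ r * (‖a‖ ^ r * ⟪a, a - b⟫) :=
          add_le_add (Real.rpow_add_one_le_of_le_mul hb.le (norm_nonneg b) hD.le hr hbD)
            (Real.rpow_add_one_le_of_le_mul ha.le (norm_nonneg a) hD.le hr haD)
    _ = D ^ r * ⟪‖b‖ ^ r • b - ‖a‖ ^ r • a, b - a⟫ := by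
          rw [inner_rpow_smul_sub_rpow_smul_eq]; ring

theorem two_rpow_neg_mul_norm_sub_rpow_mul_sq_le_inner (a b : E) {r : ℝ} (hr : 0 ≤ r) :
    2 ^ (-r) * (‖b - a‖ ^ r * ‖b - a‖ ^ 2) ≤ ⟪‖b‖ ^ r • b - ‖a‖ ^ r • a, b - a⟫ := by
  have h2r : (2 : ℝ) ^ (-r) ≤ 1 := Real.rpow_le_one_of_one_le_of_nonpos one_le_two (by linarith)
  rcases le_or_gt ⟪a, a - b⟫ 0 with ha | ha
  · exact (mul_le_of_le_one_left (by positivity) h2r).trans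
      (norm_sub_rpow_mul_sq_le_inner_of_inner_nonpos hr ha)
  rcases le_or_gt ⟪b, b - a⟫ 0 with hb | hb
  · rw [← inner_rpow_smul_sub_rpow_smul_comm, norm_sub_rev]
    exact (mul_le_of_le_one_left (by positivity) h2r).trans
      (norm_sub_rpow_mul_sq_le_inner_of_inner_nonpos hr hb)
  exact two_rpow_neg_mul_norm_sub_rpow_mul_sq_le_inner_of_pos hr hb ha

end

theorem vector_inequality (n : ℕ) (a b : EuclideanSpace ℝ (Fin n)) (q : ℝ) (hq : 2 ≤ q) :
    (2 : ℝ) ^ (2 - q) * ‖b - a‖ ^ q ≤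
      ⟪(‖b‖ ^ (q - 2)) • b - (‖a‖ ^ (q - 2)) • a, b - a⟫ := by
  have hdq : ‖b - a‖ ^ q = ‖b - a‖ ^ (q - 2) * ‖b - a‖ ^ 2 := by
    rw [← Real.rpow_two, ← Real.rpow_add' (norm_nonneg _) (by linarith), sub_add_cancel]
  rw [hdq, show 2 - q = -(q - 2) by ring]
  exact two_rpow_neg_mul_norm_sub_rpow_mul_sq_le_inner a b (by linarith)
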